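/- arXiv:1401.3555 — 3 statements merged into one kernel-verified Lean document; each statement's English description precedes it below -/
import Mathlib

section
/- Let p > 3, n = 2m ≥ 4, and let x = Σ_{i=1}^{2m} σ(i) x_i^2 ∂_{i'} (a degree-1 element of the Hamiltonian algebra). If y = Σ_{i,j} b_{ij} x_i ∂_j is a degree-0 element of W(2m) satisfying the Hamiltonian condition b_{ii} = −b_{i'i'} for all i (coming from σ(i)∂_j(f_i) = σ(j')∂_{i'}(f_{j'})), and [x, y] = 0, then y = 0. -/
set_option synthInstance.maxHeartbeats 1000000
set_option maxHeartbeats 1000000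

open MvPolynomial

/-- The truncated polynomial algebra `A(n) = k[X_1,...,X_n]/(X_1^p,...,X_n^p)`. -/
abbrev TruncPoly (k : Type*) [CommRing k] (n p : ℕ) : Type _ :=
  MvPolynomial (Fin n) k ⧸
    Ideal.span (Set.range fun i : Fin n => (X i : MvPolynomial (Fin n) k) ^ p)

/-- The image `x i` of `X i` in the truncated polynomial algebra. -/
noncomputable def tx {k : Type*} [CommRing k] {n p : ℕ} (i : Fin n) : TruncPoly k n p :=
  Ideal.Quotient.mk _ (X i)

/-- The monomial `x^α` in the truncated polynomial algebra. -/
noncomputable def txm {k : Type*} [CommRing k] {n p : ℕ} (α : Fin n → ℕ) : TruncPoly k n p :=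
  ∏ i, tx i ^ α i

/-- `ε i`, the multi-index with `1` in position `i` and `0` elsewhere. -/
def eps {n : ℕ} (i : Fin n) : Fin n → ℕ := fun s => if s = i then 1 else 0

/-- The sign `σ(i)`: `+1` for `i` in the first half, `-1` in the second half. -/
def hsg {m : ℕ} (i : Fin (2 * m)) : ℤ := if (i : ℕ) < m then 1 else -1

/-- The Hamiltonian map `D_H(f) = Σ_i σ(i) ∂_i(f) ∂_{i'}`, where `i' = 2m+1-i`
(realised as `Fin.rev i` in 0-indexed notation). -/
noncomputable def DH {k : Type*} [Field k] {m p : ℕ}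
    (Dp : Fin (2 * m) → Derivation k (TruncPoly k (2 * m) p) (TruncPoly k (2 * m) p))
    (f : TruncPoly k (2 * m) p) :
    Derivation k (TruncPoly k (2 * m) p) (TruncPoly k (2 * m) p) :=
  ∑ i : Fin (2 * m), hsg i • ((Dp i f : TruncPoly k (2 * m) p) • Dp (Fin.rev i))

/-- The Poisson bracket `{f,g} = Σ_i σ(i) ∂_i(f) ∂_{i'}(g)` on `A(2m)`. -/
noncomputable def poisson {k : Type*} [Field k] {m p : ℕ}
    (Dp : Fin (2 * m) → Derivation k (TruncPoly k (2 * m) p) (TruncPoly k (2 * m) p))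
    (f g : TruncPoly k (2 * m) p) : TruncPoly k (2 * m) p :=
  ∑ i : Fin (2 * m), hsg i • (Dp i f * Dp (Fin.rev i) g)

/-! Evaluating `[x, y] = 0` on a coordinate `x_l` gives the quadratic identity
`Σ_i σ(i') b_{il} x_{i'}^2 = 2 σ(l') x_{l'} Σ_j b_{jl'} x_j`. Applying `∂_{a'}` twice extracts the
coefficient of `x_{a'}^2`, namely `σ(a') b_{al} = 2 σ(l') δ_{la} b_{l'l'}`. Off the diagonal this
forces `b_{al} = 0`; on it, `b_{ll} = 2 b_{l'l'} = -2 b_{ll}` by the Hamiltonian condition, so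
`3 b_{ll} = 0`. Since `p > 3`, both `2` and `3` are invertible in `k`. -/

theorem Derivation.finsetSum_apply {k A ι : Type*} [CommRing k] [CommRing A] [Algebra k A]
    (s : Finset ι) (D : ι → Derivation k A A) (a : A) : (∑ i ∈ s, D i) a = ∑ i ∈ s, D i a := by
  rw [← Derivation.coeFnAddMonoidHom_apply, map_sum, Finset.sum_apply]
  rfl

section CommRing

variable {k A ι : Type*} [CommRing k] [CommRing A] [Algebra k A] [DecidableEq ι]

def IsDualCoordinates (x : ι → A) (D : ι → Derivation k A A) : Prop :=
  ∀ i j, D i (x j) = if i = j then 1 else 0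

namespace IsDualCoordinates

variable {x : ι → A} {D : ι → Derivation k A A}

theorem apply_eq (hD : IsDualCoordinates x D) (i j : ι) :
    D i (x j) = if i = j then 1 else 0 :=
  hD i j

theorem apply_apply_mul (hD : IsDualCoordinates x D) (c i j : ι) :
    D c (D c (x i * x j)) = (if i = c ∧ j = c then 2 else 0 : k) • (1 : A) := by
  by_cases hi : c = i <;> by_cases hj : c = j
  · subst hi hj; simp [Derivation.leibniz, hD.apply_eq, two_smul]
  · subst hi; simp [Derivation.leibniz, hD.apply_eq, hj, Ne.symm hj]
  · subst hj; simp [Derivation.leibniz, hD.apply_eq, hi, Ne.symm hi]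
  · simp [Derivation.leibniz, hD.apply_eq, hi, hj, Ne.symm hi]

end IsDualCoordinates

variable [Fintype ι]

noncomputable def linearDerivation (x : ι → A) (D : ι → Derivation k A A) (b : ι → ι → k) :
    Derivation k A A :=
  ∑ i, ∑ j, b i j • (x i • D j)

noncomputable def squareDerivation (x : ι → A) (D : ι → Derivation k A A) (s : ι → k)
    (r : ι → ι) : Derivation k A A :=
  ∑ i, s i • (x i ^ 2 • D (r i))

namespace IsDualCoordinates

variable {x : ι → A} {D : ι → Derivation k A A}

theorem linearDerivation_apply (hD : IsDualCoordinates x D) (b : ι → ι → k) (l : ι) :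
    linearDerivation x D b (x l) = ∑ i, b i l • x i := by
  simp [linearDerivation, Derivation.finsetSum_apply, hD.apply_eq]

theorem squareDerivation_apply (hD : IsDualCoordinates x D) {r : ι → ι}
    (hr : Function.Involutive r) (s : ι → k) (l : ι) :
    squareDerivation x D s r (x l) = s (r l) • x (r l) ^ 2 := by
  simp [squareDerivation, Derivation.finsetSum_apply, hD.apply_eq, hr.eq_iff]

theorem lie_apply (hD : IsDualCoordinates x D) {r : ι → ι} (hr : Function.Involutive r)
    (s : ι → k) (b : ι → ι → k) (l : ι) :
    ⁅squareDerivation x D s r, linearDerivation x D b⁆ (x l) =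
      ∑ i, (b i l * s (r i)) • (x (r i) * x (r i)) -
        ∑ j, (2 * s (r l) * b j (r l)) • (x (r l) * x j) := by
  rw [Derivation.commutator_apply, hD.linearDerivation_apply, hD.squareDerivation_apply hr,
    map_sum, Derivation.map_smul, sq, Derivation.leibniz, hD.linearDerivation_apply]
  simp only [Derivation.map_smul, hD.squareDerivation_apply hr, sq, smul_smul, Finset.mul_sum,
    smul_eq_mul]
  rw [← two_smul k, smul_smul, Finset.smul_sum]
  congr 1
  refine Finset.sum_congr rfl fun j _ => ?_
  rw [mul_smul_comm, smul_smul, mul_comm (s (r l))]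

end IsDualCoordinates

end CommRing

namespace IsDualCoordinates

variable {k A ι : Type*} [Field k] [CommRing A] [Algebra k A] [Nontrivial A] [Fintype ι]
  [DecidableEq ι] {x : ι → A} {D : ι → Derivation k A A}

theorem coeff_eq_of_lie_eq_zero (hD : IsDualCoordinates x D) {r : ι → ι}
    (hr : Function.Involutive r) (h2 : (2 : k) ≠ 0) (s : ι → k) (b : ι → ι → k)
    (h : ⁅squareDerivation x D s r, linearDerivation x D b⁆ = 0) (a l : ι) :
    b a l * s (r a) = 2 * s (r l) * if l = a then b (r l) (r l) else 0 := by
  have h0 := congrArg (fun d => D (r a) (D (r a) (d (x l)))) h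
  simp only [hD.lie_apply hr, Derivation.zero_apply, map_zero, map_sub, map_sum,
    Derivation.map_smul, hD.apply_apply_mul, smul_smul, ← Finset.sum_smul, ← sub_smul,
    smul_eq_zero, one_ne_zero, or_false] at h0
  simp only [hr.injective.eq_iff, and_self, mul_ite, mul_zero, Finset.sum_ite_eq',
    Finset.mem_univ, if_true, ite_and] at h0
  apply mul_right_cancel₀ h2
  by_cases hla : l = a
  · subst hla
    simp only [if_true, Finset.sum_ite_eq', Finset.mem_univ] at h0 ⊢
    linear_combination h0
  · simp only [hla, if_false, Finset.sum_const_zero, sub_zero] at h0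
    simp [hla, h0]

theorem eq_zero_of_lie_eq_zero (hD : IsDualCoordinates x D) {r : ι → ι}
    (hr : Function.Involutive r) {s : ι → k} (hs : ∀ i, s i ≠ 0) (h2 : (2 : k) ≠ 0)
    (h3 : (3 : k) ≠ 0) {b : ι → ι → k} (hb : ∀ i, b i i = - b (r i) (r i))
    (h : ⁅squareDerivation x D s r, linearDerivation x D b⁆ = 0) : b = 0 := by
  have hcoeff := hD.coeff_eq_of_lie_eq_zero hr h2 s b h
  ext a l
  rcases eq_or_ne l a with rfl | hla
  · have hdiag := hcoeff l l
    have hbr := hb (r l)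
    rw [hr l] at hbr
    rw [if_pos rfl, hbr] at hdiag
    have h3b : (3 * s (r l)) * b l l = 0 := by linear_combination hdiag
    exact (mul_eq_zero.mp h3b).resolve_left (mul_ne_zero h3 (hs _))
  · have hoff := hcoeff a l
    rw [if_neg hla, mul_zero] at hoff
    exact (mul_eq_zero.mp hoff).resolve_right (hs _)

end IsDualCoordinates

theorem truncPoly_nontrivial {k : Type*} [CommRing k] [Nontrivial k] {n p : ℕ} (hp : 0 < p) :
    Nontrivial (TruncPoly k n p) := by
  refine Ideal.Quotient.nontrivial_iff.mpr fun htop => ?_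
  have hle : Ideal.span (Set.range fun i : Fin n => (X i : MvPolynomial (Fin n) k) ^ p) ≤
      RingHom.ker (constantCoeff (σ := Fin n) (R := k)) :=
    Ideal.span_le.mpr (by rintro _ ⟨i, rfl⟩; simp [hp.ne'])
  simpa using hle (htop ▸ Submodule.mem_top : (1 : MvPolynomial (Fin n) k) ∈ _)

theorem hsg_cast_ne_zero {k : Type*} [Ring k] [Nontrivial k] {m : ℕ} (i : Fin (2 * m)) :
    (hsg i : k) ≠ 0 := by
  unfold hsg
  split_ifs <;> simp

theorem ad_injective_H_general {k : Type*} [Field k] (p m : ℕ) (hp3 : 3 < p)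
    [CharP k p]
    (Dp : Fin (2 * m) → Derivation k (TruncPoly k (2 * m) p) (TruncPoly k (2 * m) p))
    (hDp : ∀ i j, Dp i (tx j) = if i = j then 1 else 0)
    (b : Fin (2 * m) → Fin (2 * m) → k)
    (hb : ∀ i, b i i = - b (Fin.rev i) (Fin.rev i))
    (hcomm :
      ⁅∑ i : Fin (2 * m), hsg i • (((tx i : TruncPoly k (2 * m) p) ^ 2) • Dp (Fin.rev i)),
        ∑ i : Fin (2 * m), ∑ j : Fin (2 * m),
          b i j • ((tx i : TruncPoly k (2 * m) p) • Dp j)⁆ = 0) :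
    ∑ i : Fin (2 * m), ∑ j : Fin (2 * m),
      b i j • ((tx i : TruncPoly k (2 * m) p) • Dp j) = 0 := by
  have : Nontrivial (TruncPoly k (2 * m) p) := truncPoly_nontrivial (by omega)
  have hsq : squareDerivation tx Dp (fun i => (hsg i : k)) Fin.rev =
      ∑ i : Fin (2 * m), hsg i • (((tx i : TruncPoly k (2 * m) p) ^ 2) • Dp (Fin.rev i)) := by
    refine Finset.sum_congr rfl fun i _ => Derivation.ext fun a => ?_
    simp only [Derivation.smul_apply]
    exact Int.cast_smul_eq_zsmul k _ _
  have hb0 : b = 0 := IsDualCoordinates.eq_zero_of_lie_eq_zero hDp Fin.rev_involutive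
    (fun i => hsg_cast_ne_zero i)
    (by exact_mod_cast CharP.cast_ne_zero_of_ne_of_prime k Nat.prime_two (by omega))
    (by exact_mod_cast CharP.cast_ne_zero_of_ne_of_prime k Nat.prime_three (by omega))
    hb (hsq ▸ hcomm)
  simp [hb0]

/-- for `p > 3` and `n = 2m ≥ 4`, with `x = Σ_i σ(i) x_i^2 ∂_{i'}`,
if `y = Σ_{i,j} b_{ij} x_i ∂_j` satisfies the Hamiltonian condition `b_{ii} = −b_{i'i'}`
and `[x, y] = 0`, then `y = 0`. -/
theorem ad_injective_H {k : Type*} [Field k] (p m : ℕ) (hp : p.Prime) (hp3 : 3 < p)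
    [CharP k p] (hm : 2 ≤ m)
    (Dp : Fin (2 * m) → Derivation k (TruncPoly k (2 * m) p) (TruncPoly k (2 * m) p))
    (hDp : ∀ i j, Dp i (tx j) = if i = j then 1 else 0)
    (b : Fin (2 * m) → Fin (2 * m) → k)
    (hb : ∀ i, b i i = - b (Fin.rev i) (Fin.rev i))
    (hcomm :
      ⁅∑ i : Fin (2 * m), hsg i • (((tx i : TruncPoly k (2 * m) p) ^ 2) • Dp (Fin.rev i)),
        ∑ i : Fin (2 * m), ∑ j : Fin (2 * m),
          b i j • ((tx i : TruncPoly k (2 * m) p) • Dp j)⁆ = 0) :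
    ∑ i : Fin (2 * m), ∑ j : Fin (2 * m),
      b i j • ((tx i : TruncPoly k (2 * m) p) • Dp j) = 0 :=
  ad_injective_H_general p m hp3 Dp hDp b hb hcomm
end

section
/- Let p > 5 (or p ≥ 5 with n ≥ 2), τ = (p−1,...,p−1), and y = Σ_{i=1}^n a_i x^{τ−ε_i} ∂_1 ∈ W(n) with arbitrary a_i ∈ k. Then (ad y)^2 = 0 and [(ad y)(z_1), (ad y)(z_2)] = 0 for all z_1, z_2 ∈ W(n); consequently exp(ad y) = id + ad y is a Lie algebra automorphism of W(n). -/
set_option synthInstance.maxHeartbeats 1000000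
set_option maxHeartbeats 1000000

open MvPolynomial

/-!
Filter `A(n)` by the ideals `J d` spanned by the monomials of total degree at least `d`. Every
derivation maps `J (d + 1)` into `J d`, and `J (N + 1) = 0` for `N = n (p - 1)`, the degree of
`x^τ`. The coefficient `f = Σ a_i x^{τ - ε_i}` of `y = f ∂_1` has degree `N - 1`, so `y` maps
`A(n)` into `J (N - 1)` and kills `J (N - 3)` as soon as `2N - 5 > N`, i.e. `N ≥ 6`. Hence
every composite `y ∘ z₁ ∘ ⋯ ∘ z_j ∘ y` with `j ≤ 2` vanishes, which is all that `⁅y, ⁅y, z⁆⁆`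
and `⁅⁅y, z₁⁆, ⁅y, z₂⁆⁆` expand into. The two identities make `id + ad y` a Lie algebra
homomorphism with inverse `id - ad y`.
-/

namespace LieAlgebra

variable {R L : Type*} [CommRing R] [LieRing L] [LieAlgebra R L]

def oneAddAdEquiv (y : L) (h_sq : ∀ z : L, ⁅y, ⁅y, z⁆⁆ = 0)
    (h_comm : ∀ z₁ z₂ : L, ⁅⁅y, z₁⁆, ⁅y, z₂⁆⁆ = 0) : L ≃ₗ⁅R⁆ L where
  toFun z := z + ⁅y, z⁆
  invFun z := z - ⁅y, z⁆
  map_add' z₁ z₂ := by simp only [lie_add]; abel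
  map_smul' r z := by simp only [lie_smul, smul_add, RingHom.id_apply]
  map_lie' {z₁ z₂} := by
    simp only [lie_add, add_lie, h_comm]
    rw [leibniz_lie]
    abel
  left_inv z := by simp only [lie_add, h_sq]; abel
  right_inv z := by simp only [lie_sub, h_sq]; abel

end LieAlgebra

namespace TruncPoly

variable {k : Type*} [CommRing k] {n p : ℕ}

theorem tx_pow_eq_zero (i : Fin n) : (tx i : TruncPoly k n p) ^ p = 0 := by
  rw [tx, ← map_pow, Ideal.Quotient.eq_zero_iff_mem]
  exact Ideal.subset_span ⟨i, rfl⟩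

theorem txm_eq_zero {α : Fin n → ℕ} {t : Fin n} (ht : p ≤ α t) :
    (txm α : TruncPoly k n p) = 0 := by
  refine Finset.prod_eq_zero (Finset.mem_univ t) ?_
  rw [← Nat.add_sub_cancel' ht, pow_add, tx_pow_eq_zero, zero_mul]

theorem txm_add (α β : Fin n → ℕ) : (txm (α + β) : TruncPoly k n p) = txm α * txm β := by
  simp only [txm, Pi.add_apply, pow_add, Finset.prod_mul_distrib]

variable (k n p) in
noncomputable def degIdeal (d : ℕ) : Ideal (TruncPoly k n p) :=
  Ideal.span {x | ∃ α : Fin n → ℕ, d ≤ ∑ t, α t ∧ x = txm α}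

theorem degIdeal_antitone : Antitone (degIdeal k n p) :=
  fun _ _ h => Ideal.span_mono fun _ ⟨α, hα, hx⟩ => ⟨α, h.trans hα, hx⟩

theorem txm_mem_degIdeal {α : Fin n → ℕ} {d : ℕ} (h : d ≤ ∑ t, α t) :
    (txm α : TruncPoly k n p) ∈ degIdeal k n p d :=
  Ideal.subset_span ⟨α, h, rfl⟩

theorem mul_mem_degIdeal {d e : ℕ} {x y : TruncPoly k n p} (hx : x ∈ degIdeal k n p d)
    (hy : y ∈ degIdeal k n p e) : x * y ∈ degIdeal k n p (d + e) := by
  have h := Ideal.mul_mem_mul hx hy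
  rw [degIdeal, degIdeal, Ideal.span_mul_span'] at h
  refine Ideal.span_le.mpr ?_ h
  rintro _ ⟨_, ⟨α, hα, rfl⟩, _, ⟨β, hβ, rfl⟩, rfl⟩
  change txm α * txm β ∈ _
  rw [← txm_add]
  exact txm_mem_degIdeal (by simp only [Pi.add_apply, Finset.sum_add_distrib]; omega)

theorem prod_tx_pow_mem_degIdeal (α : Fin n → ℕ) (F : Finset (Fin n)) :
    ∏ i ∈ F, (tx i : TruncPoly k n p) ^ α i ∈ degIdeal k n p (∑ i ∈ F, α i) := by
  classical
  have h : ∏ i ∈ F, (tx i : TruncPoly k n p) ^ α i =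
      txm (fun t => if t ∈ F then α t else 0) := by
    simp only [txm, pow_ite, pow_zero, Finset.prod_ite_mem, Finset.univ_inter]
  rw [h]
  exact txm_mem_degIdeal (by rw [Finset.sum_ite_mem, Finset.univ_inter])

theorem tx_pow_mem_degIdeal (i : Fin n) (e : ℕ) :
    (tx i : TruncPoly k n p) ^ e ∈ degIdeal k n p e := by
  simpa using prod_tx_pow_mem_degIdeal (k := k) (p := p) (fun _ => e) {i}

theorem derivation_prod_tx_pow_mem_degIdeal (z : Derivation k (TruncPoly k n p) (TruncPoly k n p))
    (α : Fin n → ℕ) (F : Finset (Fin n)) :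
    z (∏ i ∈ F, tx i ^ α i) ∈ degIdeal k n p ((∑ i ∈ F, α i) - 1) := by
  classical
  induction F using Finset.induction_on with
  | empty => simp
  | @insert i F hi ih =>
    rw [Finset.prod_insert hi, Finset.sum_insert hi, Derivation.leibniz, Derivation.leibniz_pow,
      smul_eq_mul, smul_eq_mul, smul_eq_mul]
    refine add_mem ?_ ?_
    · exact degIdeal_antitone (by omega) (mul_mem_degIdeal (tx_pow_mem_degIdeal i (α i)) ih)
    · have h : α i • (tx i ^ (α i - 1) * z (tx i)) ∈ degIdeal k n p (α i - 1) :=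
        nsmul_mem (Ideal.mul_mem_right _ _ (tx_pow_mem_degIdeal i _)) _
      exact degIdeal_antitone (by omega) (mul_mem_degIdeal (prod_tx_pow_mem_degIdeal α F) h)

theorem derivation_apply_mem_degIdeal (z : Derivation k (TruncPoly k n p) (TruncPoly k n p))
    {d : ℕ} {x : TruncPoly k n p} (hx : x ∈ degIdeal k n p (d + 1)) :
    z x ∈ degIdeal k n p d := by
  induction hx using Submodule.span_induction with
  | mem x h =>
    obtain ⟨α, hα, rfl⟩ := h
    exact degIdeal_antitone (by omega) (derivation_prod_tx_pow_mem_degIdeal z α Finset.univ)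
  | zero => simp
  | add x y _ _ hx hy => rw [map_add]; exact add_mem hx hy
  | smul r x hx ihx =>
    rw [smul_eq_mul, Derivation.leibniz, smul_eq_mul, smul_eq_mul]
    exact add_mem (Ideal.mul_mem_left _ _ ihx)
      (Ideal.mul_mem_right _ _ (degIdeal_antitone (by omega) hx))

theorem degIdeal_eq_bot : degIdeal k n p (n * (p - 1) + 1) = ⊥ := by
  refine le_bot_iff.mp (Ideal.span_le.mpr ?_)
  rintro _ ⟨α, hα, rfl⟩
  by_contra hne
  have hlt : ∀ t, α t ≤ p - 1 := fun t => by
    by_contra! h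
    exact hne (txm_eq_zero (t := t) (by omega))
  have := Finset.sum_le_sum fun t (_ : t ∈ Finset.univ) => hlt t
  simp only [Finset.sum_const, Finset.card_univ, Fintype.card_fin, smul_eq_mul] at this
  omega

theorem smul_derivation_apply_eq_zero (D : Derivation k (TruncPoly k n p) (TruncPoly k n p))
    {f u : TruncPoly k n p} {d e : ℕ} (hf : f ∈ degIdeal k n p d)
    (hu : u ∈ degIdeal k n p (e + 1)) (hde : n * (p - 1) < d + e) : (f • D) u = 0 := by
  rw [Derivation.smul_apply, smul_eq_mul, ← Ideal.mem_bot, ← degIdeal_eq_bot]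
  exact degIdeal_antitone (by omega) (mul_mem_degIdeal hf (derivation_apply_mem_degIdeal D hu))

section Sandwich

variable {y : Derivation k (TruncPoly k n p) (TruncPoly k n p)} {m : ℕ}
  (hy_range : ∀ w, y w ∈ degIdeal k n p (m + 2)) (hy_ker : ∀ u ∈ degIdeal k n p m, y u = 0)
include hy_range hy_ker

theorem apply_comp_apply_eq_zero (z₁ z₂ : Derivation k (TruncPoly k n p) (TruncPoly k n p))
    (w : TruncPoly k n p) :
    y (y w) = 0 ∧ y (z₁ (y w)) = 0 ∧ y (z₁ (z₂ (y w))) = 0 := by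
  have hyw := hy_range w
  have hzyw := derivation_apply_mem_degIdeal z₂ hyw
  refine ⟨hy_ker _ (degIdeal_antitone (by omega) hyw),
    hy_ker _ (degIdeal_antitone (by omega) (derivation_apply_mem_degIdeal z₁ hyw)),
    hy_ker _ (derivation_apply_mem_degIdeal z₁ hzyw)⟩

theorem lie_lie_eq_zero (z : Derivation k (TruncPoly k n p) (TruncPoly k n p)) :
    ⁅y, ⁅y, z⁆⁆ = 0 := by
  ext w
  obtain ⟨h₁, h₂, -⟩ := apply_comp_apply_eq_zero hy_range hy_ker z z w
  have h₃ := (apply_comp_apply_eq_zero hy_range hy_ker z z (z w)).1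
  simp [Derivation.commutator_apply, h₁, h₂, h₃]

theorem lie_lie_lie_eq_zero (z₁ z₂ : Derivation k (TruncPoly k n p) (TruncPoly k n p)) :
    ⁅⁅y, z₁⁆, ⁅y, z₂⁆⁆ = 0 := by
  ext w
  obtain ⟨-, hy₁y, hy₁₂y⟩ := apply_comp_apply_eq_zero hy_range hy_ker z₁ z₂ w
  obtain ⟨-, hy₂y, hy₂₁y⟩ := apply_comp_apply_eq_zero hy_range hy_ker z₂ z₁ w
  obtain ⟨hyy₁, hy₂y₁, -⟩ := apply_comp_apply_eq_zero hy_range hy_ker z₂ z₁ (z₁ w)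
  obtain ⟨hyy₂, hy₁y₂, -⟩ := apply_comp_apply_eq_zero hy_range hy_ker z₁ z₂ (z₂ w)
  simp [Derivation.commutator_apply, hy₁y, hy₁₂y, hy₂y, hy₂₁y, hyy₁, hy₂y₁, hyy₂, hy₁y₂]

end Sandwich

theorem sum_tau_sub_eps_add_one (hp : 2 ≤ p) (i : Fin n) :
    ∑ s, (if s = i then p - 2 else p - 1) + 1 = n * (p - 1) := by
  have h_eps : ∑ s, eps i s = 1 := by simp [eps]
  have h_tau : ∀ s, (if s = i then p - 2 else p - 1) + eps i s = p - 1 := fun s => by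
    unfold eps; split_ifs <;> omega
  calc ∑ s, (if s = i then p - 2 else p - 1) + 1
      = ∑ s, ((if s = i then p - 2 else p - 1) + eps i s) := by
        rw [Finset.sum_add_distrib, h_eps]
    _ = n * (p - 1) := by simp [h_tau]

end TruncPoly

open TruncPoly in
theorem exp_ad_automorphism_general {k : Type*} [Field k] (p n : ℕ) (hp : p.Prime) (hp5 : 5 ≤ p)
    (hn : 1 ≤ n) (hex : ¬(n = 1 ∧ p = 5))
    (D : Fin n → Derivation k (TruncPoly k n p) (TruncPoly k n p))
    (a : Fin n → k)
    (y : Derivation k (TruncPoly k n p) (TruncPoly k n p))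
    (hy : y = ∑ i : Fin n,
      a i • ((txm (fun s => if s = i then p - 2 else p - 1) : TruncPoly k n p) • D ⟨0, hn⟩)) :
    (∀ z : Derivation k (TruncPoly k n p) (TruncPoly k n p), ⁅y, ⁅y, z⁆⁆ = 0) ∧
    (∀ z₁ z₂ : Derivation k (TruncPoly k n p) (TruncPoly k n p), ⁅⁅y, z₁⁆, ⁅y, z₂⁆⁆ = 0) ∧
    (∃ e : Derivation k (TruncPoly k n p) (TruncPoly k n p) ≃ₗ⁅k⁆
        Derivation k (TruncPoly k n p) (TruncPoly k n p),
      ∀ z, e z = z + ⁅y, z⁆) := by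
  set N := n * (p - 1)
  have hN : 6 ≤ N := by
    rcases Nat.lt_or_ge n 2 with hn1 | hn2
    · have hp6 : p ≠ 6 := by rintro rfl; norm_num at hp
      obtain rfl : n = 1 := by omega
      omega
    · have := Nat.mul_le_mul hn2 (show 4 ≤ p - 1 by omega)
      omega
  set f : TruncPoly k n p := ∑ i, a i • txm (fun s => if s = i then p - 2 else p - 1)
  have hf : f ∈ degIdeal k n p (N - 1) := Submodule.sum_mem _ fun i _ =>
    Submodule.smul_of_tower_mem _ _
      (txm_mem_degIdeal (by have := sum_tau_sub_eps_add_one (p := p) (by omega) i; omega))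
  have hyf : y = f • D ⟨0, hn⟩ := by simp only [hy, f, Finset.sum_smul, smul_assoc]
  have hy_range : ∀ w, y w ∈ degIdeal k n p (N - 3 + 2) := fun w => by
    rw [hyf]
    exact degIdeal_antitone (by omega) (Ideal.mul_mem_right _ _ hf)
  have hy_ker : ∀ u ∈ degIdeal k n p (N - 3), y u = 0 := fun u hu => by
    rw [hyf]
    exact smul_derivation_apply_eq_zero _ hf (e := N - 4) (by rwa [show N - 4 + 1 = N - 3 by omega])
      (by omega)
  have h_sq := lie_lie_eq_zero hy_range hy_ker
  have h_comm := lie_lie_lie_eq_zero hy_range hy_ker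
  exact ⟨h_sq, h_comm, LieAlgebra.oneAddAdEquiv y h_sq h_comm, fun _ => rfl⟩

/-- for `p ≥ 5` (excluding the case `n = 1, p = 5`) and
`y = Σ_i a_i x^{τ−ε_i} ∂_1 ∈ W(n)` with arbitrary `a_i ∈ k` (`τ = (p−1,...,p−1)`),
we have `(ad y)^2 = 0` and `[(ad y)(z₁), (ad y)(z₂)] = 0` for all `z₁, z₂`;
consequently `exp(ad y) = id + ad y` is a Lie algebra automorphism of `W(n)`. -/
theorem exp_ad_automorphism {k : Type*} [Field k] (p n : ℕ) (hp : p.Prime) (hp5 : 5 ≤ p)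
    [CharP k p] (hn : 1 ≤ n) (hex : ¬(n = 1 ∧ p = 5))
    (D : Fin n → Derivation k (TruncPoly k n p) (TruncPoly k n p))
    (hD : ∀ i j : Fin n, D i (tx j) = if i = j then 1 else 0)
    (a : Fin n → k)
    (y : Derivation k (TruncPoly k n p) (TruncPoly k n p))
    (hy : y = ∑ i : Fin n,
      a i • ((txm (fun s => if s = i then p - 2 else p - 1) : TruncPoly k n p) • D ⟨0, hn⟩)) :
    (∀ z : Derivation k (TruncPoly k n p) (TruncPoly k n p), ⁅y, ⁅y, z⁆⁆ = 0) ∧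
    (∀ z₁ z₂ : Derivation k (TruncPoly k n p) (TruncPoly k n p), ⁅⁅y, z₁⁆, ⁅y, z₂⁆⁆ = 0) ∧
    (∃ e : Derivation k (TruncPoly k n p) (TruncPoly k n p) ≃ₗ⁅k⁆
        Derivation k (TruncPoly k n p) (TruncPoly k n p),
      ∀ z, e z = z + ⁅y, z⁆) :=
  exp_ad_automorphism_general p n hp hp5 hn hex D a y hy
end

section
/- Let p > 3, n = 2m+1, and D_K: A(n) → W(n) be defined by D_K(f) = Σ_{i=1}^{2m} (x_i ∂_n(f) + σ(i')∂_{i'}(f)) ∂_i + (2f − Σ_{j=1}^{2m} x_j ∂_j(f)) ∂_n. Then [D_K(f), D_K(g)] = D_K(⟨f,g⟩) for all f, g ∈ A(n), where ⟨f,g⟩ = Δ(f)∂_n(g) − Δ(g)∂_n(f) + Σ_{j=1}^{2m} σ(j)∂_j(f)∂_{j'}(g) and Δ(f) = 2f − Σ_{j=1}^{2m} x_j∂_j(f). -/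
/-! Derivations of `A(n)` are determined by their values on the generators `x_i`, so it suffices
to compare both sides on each `x_i`. With the Euler derivation `E = Σ_{i ≤ 2m} x_i ∂_i` and the
Poisson bracket `S(f, g) = Σ_{j ≤ 2m} σ(j) ∂_j f ∂_{j'} g`, one has
`D_K(f)(h) = ∂_n f · E h + S(f, h) + Δ(f) ∂_n h`, and on the generators both sides become
polynomials in derivatives of `f` and `g`. They agree because the `∂_i` commute, `[∂_n, E] = 0`,
`[∂_j, E] = ∂_j`, `S` is antisymmetric and `E S(f, g) = S(E f, g) + S(f, E g) - 2 S(f, g)`. -/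

set_option synthInstance.maxHeartbeats 1000000
set_option maxHeartbeats 1000000

open MvPolynomial

/-- `Δ(f) = 2f − Σ_{j=1}^{2m} x_j ∂_j(f)` on `A(2m+1)`. -/
noncomputable def cDelta {k : Type*} [Field k] {m p : ℕ}
    (Dp : Fin (2 * m + 1) → Derivation k (TruncPoly k (2 * m + 1) p) (TruncPoly k (2 * m + 1) p))
    (f : TruncPoly k (2 * m + 1) p) : TruncPoly k (2 * m + 1) p :=
  2 * f - ∑ j : Fin (2 * m), tx j.castSucc * Dp j.castSucc f

/-- The contact bracket
`⟨f,g⟩ = Δ(f)∂_n(g) − Δ(g)∂_n(f) + Σ_{j=1}^{2m} σ(j) ∂_j(f) ∂_{j'}(g)` on `A(2m+1)`,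
where `n = 2m+1` and `j' = 2m+1−j` (realised as `Fin.rev` on the first `2m` indices). -/
noncomputable def cbracket {k : Type*} [Field k] {m p : ℕ}
    (Dp : Fin (2 * m + 1) → Derivation k (TruncPoly k (2 * m + 1) p) (TruncPoly k (2 * m + 1) p))
    (f g : TruncPoly k (2 * m + 1) p) : TruncPoly k (2 * m + 1) p :=
  cDelta Dp f * Dp (Fin.last (2 * m)) g - cDelta Dp g * Dp (Fin.last (2 * m)) f +
    ∑ j : Fin (2 * m), hsg j • (Dp j.castSucc f * Dp (Fin.rev j).castSucc g)

/-- The contact map `D_K(f) = Σ_{i=1}^{2m} (x_i ∂_n(f) + σ(i') ∂_{i'}(f)) ∂_i + Δ(f) ∂_n`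
on `A(2m+1)`, where `n = 2m+1`. -/
noncomputable def DK {k : Type*} [Field k] {m p : ℕ}
    (Dp : Fin (2 * m + 1) → Derivation k (TruncPoly k (2 * m + 1) p) (TruncPoly k (2 * m + 1) p))
    (f : TruncPoly k (2 * m + 1) p) :
    Derivation k (TruncPoly k (2 * m + 1) p) (TruncPoly k (2 * m + 1) p) :=
  (∑ i : Fin (2 * m),
      ((tx i.castSucc * Dp (Fin.last (2 * m)) f + hsg (Fin.rev i) • Dp (Fin.rev i).castSucc f :
        TruncPoly k (2 * m + 1) p) • Dp i.castSucc)) +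
    (cDelta Dp f : TruncPoly k (2 * m + 1) p) • Dp (Fin.last (2 * m))

namespace TruncPoly

variable {k : Type*} [CommRing k] {n p : ℕ}

theorem adjoin_range_tx : Algebra.adjoin k (Set.range (tx : Fin n → TruncPoly k n p)) = ⊤ := by
  have : Set.range (tx : Fin n → TruncPoly k n p) = Ideal.Quotient.mkₐ k _ '' Set.range X := by
    rw [← Set.range_comp]; rfl
  rw [this, ← AlgHom.map_adjoin, adjoin_range_X, Algebra.map_top,
    (AlgHom.range_eq_top _).mpr (Ideal.Quotient.mkₐ_surjective k _)]

theorem derivation_ext {D₁ D₂ : Derivation k (TruncPoly k n p) (TruncPoly k n p)}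
    (h : ∀ i, D₁ (tx i) = D₂ (tx i)) : D₁ = D₂ :=
  Derivation.ext_of_adjoin_eq_top _ adjoin_range_tx (by rintro _ ⟨i, rfl⟩; exact h i)

end TruncPoly

theorem hsg_rev {m : ℕ} (i : Fin (2 * m)) : hsg i.rev = -hsg i := by
  have := i.isLt
  simp only [hsg, Fin.val_rev]
  split_ifs <;> omega

section Contact

variable {k : Type*} [Field k] {m p : ℕ}
  (Dp : Fin (2 * m + 1) → Derivation k (TruncPoly k (2 * m + 1) p) (TruncPoly k (2 * m + 1) p))

local notation "A" => TruncPoly k (2 * m + 1) p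
local notation "N" => Dp (Fin.last (2 * m))

noncomputable def euler : Derivation k A A :=
  ∑ i : Fin (2 * m), (tx i.castSucc : A) • Dp i.castSucc

noncomputable def sympBracket (f g : A) : A :=
  ∑ j : Fin (2 * m), hsg j • (Dp j.castSucc f * Dp j.rev.castSucc g)

theorem euler_apply (h : A) : euler Dp h = ∑ i : Fin (2 * m), tx i.castSucc * Dp i.castSucc h := by
  rw [euler, ← Derivation.coeFnAddMonoidHom_apply, map_sum, Finset.sum_apply]
  simp [Derivation.coeFnAddMonoidHom_apply]

theorem cDelta_eq (f : A) : cDelta Dp f = 2 * f - euler Dp f := by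
  rw [cDelta, euler_apply]

theorem cbracket_eq (f g : A) :
    cbracket Dp f g = cDelta Dp f * N g - cDelta Dp g * N f + sympBracket Dp f g := rfl

theorem sympBracket_swap (f g : A) : sympBracket Dp g f = -sympBracket Dp f g := by
  rw [sympBracket, sympBracket, ← Finset.sum_neg_distrib]
  refine Fintype.sum_equiv Fin.revPerm _ _ fun j => ?_
  simp only [Fin.revPerm_apply, Fin.rev_rev, hsg_rev, neg_smul, zsmul_eq_mul]
  ring

theorem DK_apply (f h : A) :
    DK Dp f h = N f * euler Dp h + sympBracket Dp f h + cDelta Dp f * N h := by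
  have hrev : ∑ i : Fin (2 * m), hsg i.rev • (Dp i.rev.castSucc f * Dp i.castSucc h)
      = sympBracket Dp f h :=
    Fintype.sum_equiv Fin.revPerm _ _ fun i => by simp
  rw [DK, Derivation.add_apply, ← Derivation.coeFnAddMonoidHom_apply, map_sum, Finset.sum_apply,
    ← hrev, euler_apply, Finset.mul_sum, ← Finset.sum_add_distrib]
  congr 1
  refine Finset.sum_congr rfl fun i _ => ?_
  simp only [Derivation.coeFnAddMonoidHom_apply, Derivation.smul_apply, smul_eq_mul, zsmul_eq_mul]
  ring

variable {Dp} (hDp : ∀ i j, Dp i (tx j) = if i = j then 1 else 0)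
include hDp

theorem Dp_comm (i j : Fin (2 * m + 1)) (h : A) : Dp i (Dp j h) = Dp j (Dp i h) := by
  have : ⁅Dp i, Dp j⁆ = 0 := TruncPoly.derivation_ext fun l => by
    rw [Derivation.commutator_apply, Derivation.zero_apply, hDp, hDp]
    split_ifs <;> simp
  have := Derivation.congr_fun this h
  rwa [Derivation.commutator_apply, Derivation.zero_apply, sub_eq_zero] at this

theorem Dp_last_euler (h : A) : N (euler Dp h) = euler Dp (N h) := by
  simp only [euler_apply, map_sum, Derivation.leibniz, hDp, smul_eq_mul,
    if_neg (Fin.castSucc_lt_last _).ne', mul_zero, add_zero, Dp_comm hDp (Fin.last _)]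

theorem Dp_castSucc_euler (j : Fin (2 * m)) (h : A) :
    Dp j.castSucc (euler Dp h) = Dp j.castSucc h + euler Dp (Dp j.castSucc h) := by
  simp only [euler_apply, map_sum, Derivation.leibniz, hDp, smul_eq_mul, Fin.castSucc_inj,
    Dp_comm hDp j.castSucc, Finset.sum_add_distrib, mul_ite, mul_one, mul_zero,
    Finset.sum_ite_eq, Finset.mem_univ, if_true]
  ring

theorem Dp_sympBracket (i : Fin (2 * m + 1)) (f g : A) :
    Dp i (sympBracket Dp f g) = sympBracket Dp (Dp i f) g + sympBracket Dp f (Dp i g) := by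
  simp only [sympBracket, map_sum, map_zsmul, Derivation.leibniz, smul_eq_mul, Dp_comm hDp i,
    ← Finset.sum_add_distrib, smul_add]
  exact Finset.sum_congr rfl fun j _ => by ring

theorem euler_sympBracket (f g : A) :
    euler Dp (sympBracket Dp f g)
      = sympBracket Dp (euler Dp f) g + sympBracket Dp f (euler Dp g) - 2 * sympBracket Dp f g := by
  simp only [sympBracket, map_sum, map_zsmul, Derivation.leibniz, smul_eq_mul,
    Dp_castSucc_euler hDp, Finset.mul_sum, ← Finset.sum_add_distrib, ← Finset.sum_sub_distrib]
  refine Finset.sum_congr rfl fun j _ => ?_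
  simp only [zsmul_eq_mul]
  ring

theorem DK_tx_last (f : A) : DK Dp f (tx (Fin.last (2 * m))) = cDelta Dp f := by
  simp [DK_apply, euler_apply, sympBracket, hDp, (Fin.castSucc_lt_last _).ne]

theorem DK_tx_castSucc (f : A) (j : Fin (2 * m)) :
    DK Dp f (tx j.castSucc) = tx j.castSucc * N f + hsg j.rev • Dp j.rev.castSucc f := by
  simp only [DK_apply, euler_apply, sympBracket, hDp, Fin.castSucc_inj, Fin.rev_eq_iff,
    (Fin.castSucc_lt_last _).ne', mul_ite, mul_one, mul_zero, smul_ite, smul_zero, zsmul_eq_mul,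
    Finset.sum_ite_eq', Finset.mem_univ, if_true, if_false, add_zero]
  ring

theorem commutator_DK_tx_last (f g : A) :
    ⁅DK Dp f, DK Dp g⁆ (tx (Fin.last (2 * m)))
      = DK Dp (cbracket Dp f g) (tx (Fin.last (2 * m))) := by
  simp only [Derivation.commutator_apply, DK_tx_last hDp, DK_apply, cbracket_eq, cDelta_eq,
    two_mul, map_add, map_sub, Derivation.leibniz, smul_eq_mul, Dp_last_euler hDp,
    euler_sympBracket hDp]
  linear_combination sympBracket_swap Dp (euler Dp f) g - 2 * sympBracket_swap Dp f g

theorem commutator_DK_tx_castSucc (f g : A) (j : Fin (2 * m)) :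
    ⁅DK Dp f, DK Dp g⁆ (tx j.castSucc) = DK Dp (cbracket Dp f g) (tx j.castSucc) := by
  simp only [Derivation.commutator_apply, DK_tx_castSucc hDp, map_add, map_zsmul,
    Derivation.leibniz, smul_eq_mul]
  simp only [DK_apply, cbracket_eq, cDelta_eq, two_mul, map_add, map_sub, Derivation.leibniz,
    smul_eq_mul, zsmul_eq_mul, Dp_last_euler hDp, Dp_castSucc_euler hDp, Dp_sympBracket hDp,
    Dp_comm hDp _ (Fin.last _)]
  linear_combination -tx j.castSucc * sympBracket_swap Dp (N f) g
    - (hsg j.rev : A) * sympBracket_swap Dp (Dp j.rev.castSucc f) g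

end Contact

theorem DK_bracket_general {k : Type*} [Field k] (p m : ℕ)
    (Dp : Fin (2 * m + 1) → Derivation k (TruncPoly k (2 * m + 1) p) (TruncPoly k (2 * m + 1) p))
    (hDp : ∀ i j, Dp i (tx j) = if i = j then 1 else 0)
    (f g : TruncPoly k (2 * m + 1) p) :
    ⁅DK Dp f, DK Dp g⁆ = DK Dp (cbracket Dp f g) := by
  refine TruncPoly.derivation_ext fun j => ?_
  induction j using Fin.lastCases with
  | last => exact commutator_DK_tx_last hDp f g
  | cast j => exact commutator_DK_tx_castSucc hDp f g j

/-- `[D_K(f), D_K(g)] = D_K(⟨f,g⟩)` for all `f, g ∈ A(2m+1)`, `p > 3`. -/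
theorem DK_bracket {k : Type*} [Field k] (p m : ℕ) (hp : p.Prime) (hp3 : 3 < p) [CharP k p]
    (Dp : Fin (2 * m + 1) → Derivation k (TruncPoly k (2 * m + 1) p) (TruncPoly k (2 * m + 1) p))
    (hDp : ∀ i j, Dp i (tx j) = if i = j then 1 else 0)
    (f g : TruncPoly k (2 * m + 1) p) :
    ⁅DK Dp f, DK Dp g⁆ = DK Dp (cbracket Dp f g) :=
  DK_bracket_general p m Dp hDp f g
end
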